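/- arXiv:2303.11566 — 3 statements merged into one kernel-verified Lean document; each statement's English description precedes it below -/
import Mathlib

section
/- Let ρ0 and ρ1 be density matrices on ℂ^n, let τ ≥ 0, let A = ρ1 − τ·ρ0 (a Hermitian matrix), and let P* be the orthogonal projection onto the span of the eigenvectors of A with strictly positive eigenvalues. Then for every measurement operator P (i.e., Hermitian P with 0 ≤ P ≤ I), the Bayes risk satisfies τ·Tr(P*·ρ0) + Tr((I − P*)·ρ1) ≤ τ·Tr(P·ρ0) + Tr((I − P)·ρ1). In other words, the quantum likelihood-ratio projection P* minimizes the Bayes risk for quantum binary detection. -/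
open Matrix ComplexOrder

/-- A density matrix on ℂ^n: Hermitian, positive semidefinite, trace 1. -/
def Matrix.IsDensityMatrix {n : ℕ} (ρ : Matrix (Fin n) (Fin n) ℂ) : Prop :=
  ρ.IsHermitian ∧ ρ.PosSemidef ∧ ρ.trace = 1

/-- A measurement operator: Hermitian `P` with `0 ≤ P ≤ I`, i.e. both `P` and
`1 - P` are positive semidefinite. -/
def Matrix.IsMeasurement {n : ℕ} (P : Matrix (Fin n) (Fin n) ℂ) : Prop :=
  P.IsHermitian ∧ P.PosSemidef ∧ (1 - P).PosSemidef

/-- The orthogonal projection onto the span of the eigenvectors of a Hermitian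
matrix `A` with strictly positive eigenvalues,
`P* = Σ_{η_j > 0} |η_j⟩⟨η_j|` in terms of a spectral decomposition of `A`. -/
noncomputable def Matrix.IsHermitian.posEigenProj {n : ℕ}
    {A : Matrix (Fin n) (Fin n) ℂ} (hA : A.IsHermitian) : Matrix (Fin n) (Fin n) ℂ :=
  (hA.eigenvectorUnitary : Matrix (Fin n) (Fin n) ℂ) *
    Matrix.diagonal (fun j => if 0 < hA.eigenvalues j then (1 : ℂ) else 0) *
    star (hA.eigenvectorUnitary : Matrix (Fin n) (Fin n) ℂ)

/-! Writing the risk as `Tr ρ1 - Tr (P A)`, it suffices that `P*` maximizes `Tr (P A)` over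
`0 ≤ P ≤ 1`. In an eigenbasis of `A` this trace is `∑ j, Q j j * η j` with `0 ≤ Q j j ≤ 1`
(`Q = U⋆ P U`), which is largest when `Q j j = 1` exactly for `η j > 0`, i.e. for `Q = U⋆ P* U`. -/

variable {ι R : Type*} [Fintype ι] [DecidableEq ι]

lemma Complex.mul_le_ite_pos_mul {q : ℂ} (hq0 : 0 ≤ q) (hq1 : q ≤ 1) (x : ℝ) :
    q * x ≤ (if 0 < x then 1 else 0) * x := by
  split_ifs with hx
  · simpa using mul_le_mul_of_nonneg_right hq1 (by exact_mod_cast hx.le : (0 : ℂ) ≤ x)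
  · simpa using mul_nonpos_of_nonneg_of_nonpos hq0 (by exact_mod_cast not_lt.mp hx : (x : ℂ) ≤ 0)

lemma Matrix.trace_mul_diagonal_le_of_posSemidef {Q : Matrix ι ι ℂ} (hQ : Q.PosSemidef)
    (hQ1 : (1 - Q).PosSemidef) (d : ι → ℝ) :
    (Q * diagonal (RCLike.ofReal ∘ d)).trace ≤
      (diagonal (fun j => if 0 < d j then (1 : ℂ) else 0) * diagonal (RCLike.ofReal ∘ d)).trace := by
  simp only [trace, diag, mul_diagonal, diagonal_apply_eq, Function.comp_apply]
  refine Finset.sum_le_sum fun j _ => Complex.mul_le_ite_pos_mul hQ.diag_nonneg ?_ (d j)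
  simpa [sub_nonneg] using hQ1.diag_nonneg (i := j)

lemma Matrix.PosSemidef.one_sub_star_mul_mul [CommRing R] [PartialOrder R] [StarRing R]
    {P : Matrix ι ι R} (hP1 : (1 - P).PosSemidef) (U : unitary (Matrix ι ι R)) :
    (1 - star (U : Matrix ι ι R) * P * U).PosSemidef := by
  have h := hP1.conjTranspose_mul_mul_same (U : Matrix ι ι R)
  rwa [Matrix.mul_sub, Matrix.sub_mul, mul_one, ← star_eq_conjTranspose,
    Unitary.coe_star_mul_self] at h

lemma Matrix.IsHermitian.trace_mul_le_trace_posEigenProj_mul {n : ℕ}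
    {A : Matrix (Fin n) (Fin n) ℂ} (hA : A.IsHermitian) {P : Matrix (Fin n) (Fin n) ℂ}
    (hP : P.PosSemidef) (hP1 : (1 - P).PosSemidef) :
    (P * A).trace ≤ (hA.posEigenProj * A).trace := by
  set U : Matrix (Fin n) (Fin n) ℂ := ↑hA.eigenvectorUnitary
  have hUU : star U * U = 1 := Unitary.coe_star_mul_self hA.eigenvectorUnitary
  have h_conj : ∀ X : Matrix (Fin n) (Fin n) ℂ,
      (X * A).trace = (star U * X * U * diagonal (RCLike.ofReal ∘ hA.eigenvalues)).trace := by
    intro X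
    conv_lhs => rw [hA.spectral_theorem, Unitary.conjStarAlgAut_apply]
    rw [← mul_assoc, trace_mul_cycle, ← mul_assoc]
  have h_proj : star U * hA.posEigenProj * U =
      diagonal (fun j => if 0 < hA.eigenvalues j then (1 : ℂ) else 0) := by
    simp only [posEigenProj, U, ← mul_assoc, hUU, one_mul]
    rw [mul_assoc, hUU, mul_one]
  rw [h_conj P, h_conj hA.posEigenProj, h_proj]
  exact trace_mul_diagonal_le_of_posSemidef (hP.conjTranspose_mul_mul_same U)
    (hP1.one_sub_star_mul_mul hA.eigenvectorUnitary) hA.eigenvalues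

def Matrix.bayesRisk [CommRing R] (τ : R) (ρ0 ρ1 P : Matrix ι ι R) : R :=
  τ * (P * ρ0).trace + ((1 - P) * ρ1).trace

lemma Matrix.bayesRisk_eq [CommRing R] (τ : R) (ρ0 ρ1 P : Matrix ι ι R) :
    bayesRisk τ ρ0 ρ1 P = ρ1.trace - (P * (ρ1 - τ • ρ0)).trace := by
  simp only [bayesRisk, Matrix.mul_sub, Matrix.sub_mul, Matrix.mul_smul, trace_sub, trace_smul,
    smul_eq_mul, one_mul]
  ring

theorem qlrt_minimizes_bayes_risk_general {n : ℕ} (ρ0 ρ1 : Matrix (Fin n) (Fin n) ℂ) (τ : ℝ)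
    {A : Matrix (Fin n) (Fin n) ℂ} (hAdef : A = ρ1 - (τ : ℂ) • ρ0) (hA : A.IsHermitian)
    (P : Matrix (Fin n) (Fin n) ℂ) (hP : P.IsMeasurement) :
    (τ : ℂ) * (hA.posEigenProj * ρ0).trace + ((1 - hA.posEigenProj) * ρ1).trace ≤
      (τ : ℂ) * (P * ρ0).trace + ((1 - P) * ρ1).trace := by
  change bayesRisk (τ : ℂ) ρ0 ρ1 hA.posEigenProj ≤ bayesRisk (τ : ℂ) ρ0 ρ1 P
  rw [bayesRisk_eq, bayesRisk_eq, ← hAdef]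
  exact sub_le_sub_left (hA.trace_mul_le_trace_posEigenProj_mul hP.2.1 hP.2.2) _

/-- The quantum likelihood-ratio projection `P*` (projection onto the
positive eigenspaces of `A = ρ1 - τ • ρ0`) minimizes the Bayes risk
`τ·Tr(P·ρ0) + Tr((I - P)·ρ1)` over all measurement operators `P`. -/
theorem qlrt_minimizes_bayes_risk {n : ℕ} (ρ0 ρ1 : Matrix (Fin n) (Fin n) ℂ)
    (hρ0 : ρ0.IsDensityMatrix) (hρ1 : ρ1.IsDensityMatrix) (τ : ℝ) (hτ : 0 ≤ τ)
    {A : Matrix (Fin n) (Fin n) ℂ} (hAdef : A = ρ1 - (τ : ℂ) • ρ0) (hA : A.IsHermitian)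
    (P : Matrix (Fin n) (Fin n) ℂ) (hP : P.IsMeasurement) :
    (τ : ℂ) * (hA.posEigenProj * ρ0).trace + ((1 - hA.posEigenProj) * ρ1).trace ≤
      (τ : ℂ) * (P * ρ0).trace + ((1 - P) * ρ1).trace :=
  qlrt_minimizes_bayes_risk_general ρ0 ρ1 τ hAdef hA P hP
end

section
/- Let ρ0 and ρ1 be density matrices on ℂ^n, let τ ≥ 0, let A = ρ1 − τ·ρ0, and let P* be the orthogonal projection onto the span of the eigenvectors of A with strictly positive eigenvalues. Then P* maximizes Tr(P·A) over all measurement operators P with 0 ≤ P ≤ I, and the maximum value equals the sum of the strictly positive eigenvalues of A: Tr(P*·A) = Σ_{η_j > 0} η_j, where η_1, …, η_n are the eigenvalues of A. -/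
open Matrix ComplexOrder

/-!
Write `A = U D U*` with `U` unitary and `D = diag(η)`. For any `P`, `Tr(P A) = Σ_j q_j η_j` with
`q_j = (U* P U)_jj`, and `0 ≤ P ≤ 1` is preserved by unitary conjugation, so `0 ≤ q_j ≤ 1`.
Hence each term is at most `η_j` when `η_j > 0` and at most `0` otherwise. The projection `P*`
attains every one of these bounds, since `U* P* U` is the `0/1` diagonal selecting `η_j > 0`.
-/

lemma RCLike.mul_ofReal_le_ite_pos {𝕜 : Type*} [RCLike 𝕜] {q : 𝕜} (hq0 : 0 ≤ q) (hq1 : q ≤ 1)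
    (η : ℝ) : q * η ≤ if 0 < η then (η : 𝕜) else 0 := by
  split_ifs with hη
  · simpa using mul_le_mul_of_nonneg_right hq1 (RCLike.ofReal_nonneg.mpr hη.le)
  · simpa using mul_le_mul_of_nonneg_left (RCLike.ofReal_nonpos.mpr (not_lt.mp hη)) hq0

namespace Matrix

variable {𝕜 ι : Type*} [RCLike 𝕜] [DecidableEq ι]

lemma PosSemidef.diag_le_one_of_one_sub {Q : Matrix ι ι 𝕜} (hQ : (1 - Q).PosSemidef) (i : ι) :
    Q i i ≤ 1 :=
  sub_nonneg.mp (by simpa using hQ.diag_nonneg (i := i))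

variable [Fintype ι]

lemma PosSemidef.one_sub_star_mul_mul_unitary {P : Matrix ι ι 𝕜} (hP : (1 - P).PosSemidef)
    (U : unitaryGroup ι 𝕜) : (1 - star (U : Matrix ι ι 𝕜) * P * U).PosSemidef := by
  have := hP.conjTranspose_mul_mul_same (U : Matrix ι ι 𝕜)
  rwa [Matrix.mul_sub, Matrix.sub_mul, Matrix.mul_one, ← star_eq_conjTranspose,
    Unitary.coe_star_mul_self] at this

lemma IsHermitian.trace_mul_eq_sum_diag_mul_eigenvalues {A : Matrix ι ι 𝕜} (hA : A.IsHermitian)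
    (P : Matrix ι ι 𝕜) :
    (P * A).trace = ∑ j, (star (hA.eigenvectorUnitary : Matrix ι ι 𝕜) * P *
      hA.eigenvectorUnitary) j j * hA.eigenvalues j := by
  set U : Matrix ι ι 𝕜 := (hA.eigenvectorUnitary : Matrix ι ι 𝕜)
  calc (P * A).trace
      = (P * (U * diagonal (RCLike.ofReal ∘ hA.eigenvalues) * star U)).trace :=
        congrArg (fun M => (P * M).trace) hA.spectral_theorem
    _ = (star U * P * U * diagonal (RCLike.ofReal ∘ hA.eigenvalues)).trace := by
        rw [← Matrix.mul_assoc, ← Matrix.mul_assoc, trace_mul_comm]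
        simp only [Matrix.mul_assoc]
    _ = _ := by simp [trace, mul_diagonal]

lemma IsHermitian.trace_mul_le_sum_pos_eigenvalues {A P : Matrix ι ι 𝕜} (hA : A.IsHermitian)
    (hP : P.PosSemidef) (hP' : (1 - P).PosSemidef) :
    (P * A).trace ≤ ∑ j, if 0 < hA.eigenvalues j then (hA.eigenvalues j : 𝕜) else 0 := by
  rw [hA.trace_mul_eq_sum_diag_mul_eigenvalues]
  refine Finset.sum_le_sum fun j _ => RCLike.mul_ofReal_le_ite_pos ?_ ?_ _
  · simpa [star_eq_conjTranspose] using
      (hP.conjTranspose_mul_mul_same (hA.eigenvectorUnitary : Matrix ι ι 𝕜)).diag_nonneg (i := j)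
  · exact (hP'.one_sub_star_mul_mul_unitary _).diag_le_one_of_one_sub j

lemma IsHermitian.trace_posEigenProj_mul {n : ℕ} {A : Matrix (Fin n) (Fin n) ℂ}
    (hA : A.IsHermitian) :
    (hA.posEigenProj * A).trace =
      ∑ j, if 0 < hA.eigenvalues j then (hA.eigenvalues j : ℂ) else 0 := by
  have hconj : star (hA.eigenvectorUnitary : Matrix (Fin n) (Fin n) ℂ) * hA.posEigenProj *
      hA.eigenvectorUnitary =
        diagonal fun j => if 0 < hA.eigenvalues j then (1 : ℂ) else 0 := by
    simp only [posEigenProj, Matrix.mul_assoc, Unitary.coe_star_mul_self, Matrix.mul_one]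
    simp only [← Matrix.mul_assoc, Unitary.coe_star_mul_self, Matrix.one_mul]
  rw [hA.trace_mul_eq_sum_diag_mul_eigenvalues, hconj]
  simp

end Matrix

theorem posEigenProj_maximizes_trace_general {n : ℕ}
    {A : Matrix (Fin n) (Fin n) ℂ} (hA : A.IsHermitian) :
    (∀ P : Matrix (Fin n) (Fin n) ℂ, P.IsMeasurement →
        (P * A).trace ≤ (hA.posEigenProj * A).trace) ∧
      (hA.posEigenProj * A).trace =
        ∑ j : Fin n, if 0 < hA.eigenvalues j then (hA.eigenvalues j : ℂ) else 0 :=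
  ⟨fun _ hP => hA.trace_posEigenProj_mul ▸ hA.trace_mul_le_sum_pos_eigenvalues hP.2.1 hP.2.2,
    hA.trace_posEigenProj_mul⟩

/-- `P*` maximizes `Tr(P·A)` over measurement operators `0 ≤ P ≤ I`,
and the maximum equals the sum of the strictly positive eigenvalues of `A`. -/
theorem posEigenProj_maximizes_trace {n : ℕ} (ρ0 ρ1 : Matrix (Fin n) (Fin n) ℂ)
    (hρ0 : ρ0.IsDensityMatrix) (hρ1 : ρ1.IsDensityMatrix) (τ : ℝ) (hτ : 0 ≤ τ)
    {A : Matrix (Fin n) (Fin n) ℂ} (hAdef : A = ρ1 - (τ : ℂ) • ρ0) (hA : A.IsHermitian) :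
    (∀ P : Matrix (Fin n) (Fin n) ℂ, P.IsMeasurement →
        (P * A).trace ≤ (hA.posEigenProj * A).trace) ∧
      (hA.posEigenProj * A).trace =
        ∑ j : Fin n, if 0 < hA.eigenvalues j then (hA.eigenvalues j : ℂ) else 0 :=
  posEigenProj_maximizes_trace_general hA
end

section
/- Let ρ0 and ρ1 be density matrices on ℂ^n, let τ > 0, let A = ρ1 − τ·ρ0, and let P* be the orthogonal projection onto the span of the eigenvectors of A with strictly positive eigenvalues. Then for every measurement operator P' with 0 ≤ P' ≤ I whose detection rate equals that of P*, i.e., Tr(P'·ρ1) = Tr(P*·ρ1), the false alarm rate of P* is no larger: Tr(P*·ρ0) ≤ Tr(P'·ρ0). That is, among all measurements achieving the same detection rate, the quantum likelihood-ratio test achieves the minimal false alarm rate. -/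
open Matrix ComplexOrder

/-! In an eigenbasis of `A` with eigenvalues `η_j`, `Tr(P A) = ∑ⱼ pⱼⱼ η_j` where the diagonal
entries `pⱼⱼ` of a measurement lie in `[0, 1]`; this is maximised by `P*`, whose diagonal is the
indicator of `η_j > 0`. Since `Tr(P A) = Tr(P ρ1) - τ Tr(P ρ0)`, at equal detection rate the
maximiser of `Tr(P A)` has the smaller false alarm rate. -/

namespace Matrix

variable {ι : Type*} [DecidableEq ι]

lemma diag_mem_Icc_of_posSemidef_of_posSemidef_one_sub {𝕜 : Type*} [RCLike 𝕜]
    {M : Matrix ι ι 𝕜} (hM : M.PosSemidef) (hM1 : (1 - M).PosSemidef) (i : ι) :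
    M i i ∈ Set.Icc 0 1 := by
  have h := hM1.diag_nonneg (i := i)
  rw [sub_apply, one_apply_eq, sub_nonneg] at h
  exact ⟨hM.diag_nonneg, h⟩

variable [Fintype ι]

lemma trace_mul_mul_diagonal_mul {R : Type*} [CommSemiring R] (Q U V : Matrix ι ι R)
    (d : ι → R) : (Q * (U * diagonal d * V)).trace = ∑ j, (V * Q * U) j j * d j := by
  rw [← Matrix.mul_assoc, trace_mul_cycle, ← Matrix.mul_assoc]
  simp [trace, mul_diagonal]

lemma star_mul_one_sub_mul_unitary {𝕜 : Type*} [RCLike 𝕜] (M : Matrix ι ι 𝕜)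
    (U : unitaryGroup ι 𝕜) :
    star (U : Matrix ι ι 𝕜) * (1 - M) * U = 1 - star (U : Matrix ι ι 𝕜) * M * U := by
  rw [Matrix.mul_sub, Matrix.sub_mul, Matrix.mul_one, Unitary.coe_star_mul_self]

lemma diag_unitary_conj_mem_Icc {𝕜 : Type*} [RCLike 𝕜]
    {M : Matrix ι ι 𝕜} (hM : M.PosSemidef) (hM1 : (1 - M).PosSemidef) (U : unitaryGroup ι 𝕜)
    (i : ι) : (star (U : Matrix ι ι 𝕜) * M * U) i i ∈ Set.Icc 0 1 := by
  refine diag_mem_Icc_of_posSemidef_of_posSemidef_one_sub ?_ ?_ i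
  · simpa [star_eq_conjTranspose] using hM.conjTranspose_mul_mul_same (U : Matrix ι ι 𝕜)
  · rw [← star_mul_one_sub_mul_unitary]
    simpa [star_eq_conjTranspose] using hM1.conjTranspose_mul_mul_same (U : Matrix ι ι 𝕜)

end Matrix

lemma Complex.mul_ofReal_le_ite_pos_mul {c : ℂ} (hc : c ∈ Set.Icc 0 1) (d : ℝ) :
    c * d ≤ (if 0 < d then 1 else 0) * d := by
  split_ifs with hd
  · simpa using mul_le_mul_of_nonneg_right hc.2 (by exact_mod_cast hd.le : (0 : ℂ) ≤ d)
  · simpa using mul_le_mul_of_nonneg_left (by exact_mod_cast not_lt.mp hd : (d : ℂ) ≤ 0) hc.1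

namespace Matrix.IsHermitian

variable {n : ℕ} {A : Matrix (Fin n) (Fin n) ℂ}

lemma trace_mul_eq_sum_eigenvalues (hA : A.IsHermitian) (Q : Matrix (Fin n) (Fin n) ℂ) :
    (Q * A).trace = ∑ j, (star (hA.eigenvectorUnitary : Matrix (Fin n) (Fin n) ℂ) * Q *
      hA.eigenvectorUnitary) j j * hA.eigenvalues j := by
  conv_lhs => rw [hA.spectral_theorem, Unitary.conjStarAlgAut_apply]
  exact trace_mul_mul_diagonal_mul _ _ _ _

lemma star_eigenvectorUnitary_mul_posEigenProj_mul (hA : A.IsHermitian) :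
    star (hA.eigenvectorUnitary : Matrix (Fin n) (Fin n) ℂ) * hA.posEigenProj *
      hA.eigenvectorUnitary =
      diagonal (fun j => if 0 < hA.eigenvalues j then (1 : ℂ) else 0) := by
  simp only [posEigenProj, ← Matrix.mul_assoc, Unitary.coe_star_mul_self, Matrix.one_mul]
  rw [Matrix.mul_assoc, Unitary.coe_star_mul_self, Matrix.mul_one]

lemma trace_mul_le_trace_posEigenProj_mul_s3 (hA : A.IsHermitian) {P : Matrix (Fin n) (Fin n) ℂ}
    (hP : P.PosSemidef) (hP1 : (1 - P).PosSemidef) :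
    (P * A).trace ≤ (hA.posEigenProj * A).trace := by
  rw [hA.trace_mul_eq_sum_eigenvalues, hA.trace_mul_eq_sum_eigenvalues,
    star_eigenvectorUnitary_mul_posEigenProj_mul]
  refine Finset.sum_le_sum fun j _ => ?_
  rw [diagonal_apply_eq]
  exact Complex.mul_ofReal_le_ite_pos_mul (diag_unitary_conj_mem_Icc hP hP1 _ j) _

end Matrix.IsHermitian

theorem qlrt_minimal_false_alarm_general {n : ℕ} (ρ0 ρ1 : Matrix (Fin n) (Fin n) ℂ)
    (τ : ℝ) (hτ : 0 < τ)
    {A : Matrix (Fin n) (Fin n) ℂ} (hAdef : A = ρ1 - (τ : ℂ) • ρ0) (hA : A.IsHermitian)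
    (P' : Matrix (Fin n) (Fin n) ℂ) (hP' : P'.IsMeasurement)
    (hdet : (P' * ρ1).trace = (hA.posEigenProj * ρ1).trace) :
    (hA.posEigenProj * ρ0).trace ≤ (P' * ρ0).trace := by
  obtain ⟨-, hP, hP1⟩ := hP'
  have expand (Q : Matrix (Fin n) (Fin n) ℂ) :
      (Q * A).trace = (Q * ρ1).trace - τ * (Q * ρ0).trace := by
    rw [hAdef, Matrix.mul_sub, trace_sub, Matrix.mul_smul, trace_smul, smul_eq_mul]
  have key := hA.trace_mul_le_trace_posEigenProj_mul_s3 hP hP1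
  rw [expand, expand, hdet, sub_le_sub_iff_left] at key
  exact le_of_mul_le_mul_left key (by exact_mod_cast hτ)

/-- Among all measurements achieving the same detection rate as the
quantum likelihood-ratio projection `P*` (positive-eigenspace projection of
`A = ρ1 - τ • ρ0`, `τ > 0`), `P*` achieves the minimal false alarm rate. -/
theorem qlrt_minimal_false_alarm {n : ℕ} (ρ0 ρ1 : Matrix (Fin n) (Fin n) ℂ)
    (hρ0 : ρ0.IsDensityMatrix) (hρ1 : ρ1.IsDensityMatrix) (τ : ℝ) (hτ : 0 < τ)
    {A : Matrix (Fin n) (Fin n) ℂ} (hAdef : A = ρ1 - (τ : ℂ) • ρ0) (hA : A.IsHermitian)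
    (P' : Matrix (Fin n) (Fin n) ℂ) (hP' : P'.IsMeasurement)
    (hdet : (P' * ρ1).trace = (hA.posEigenProj * ρ1).trace) :
    (hA.posEigenProj * ρ0).trace ≤ (P' * ρ0).trace :=
  qlrt_minimal_false_alarm_general ρ0 ρ1 τ hτ hAdef hA P' hP' hdet
end
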